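/- Let 𝔭 : ℝ → ℍ be a differentiable quaternion-valued function with |𝔭(t)| = 1 for all t, write 𝔭 = [p, q], and let r ∈ ℝ³ be a fixed vector. Define R(t) ∈ ℝ³ as the imaginary part of 𝔭(t) ⋆ [0, r] ⋆ 𝔭(t)*, and define the angular frequency Ω₀(t) := 2(−ṗ q + q̇ p − q̇ × q). Then R is differentiable and satisfies the rigid-body rotation equation Ṙ(t) = Ω₀(t) × R(t) for all t. -/

import Mathlib

/-!
Put `w := 𝔭̇ 𝔭*`. Differentiating `𝔭 𝔭* = 1` gives `𝔭 𝔭̇* = -w`, so inserting `𝔭* 𝔭 = 1`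
into the product rule turns `Ṙ = 𝔭̇ [0, r] 𝔭* + 𝔭 [0, r] 𝔭̇*` into the commutator `w R - R w`.
The vector part of a quaternion commutator is twice the cross product of the vector parts,
and `2 Im w = Ω₀`.
-/

open scoped BigOperators

noncomputable section

/-- The quaternion `[p, q]` with real part `p` and imaginary (vector) part `q ∈ ℝ³`. -/
noncomputable def quat (p : ℝ) (q : Fin 3 → ℝ) : Quaternion ℝ := ⟨p, q 0, q 1, q 2⟩

/-- Euclidean dot product on `ℝ³`. -/
noncomputable def dot3 (a b : Fin 3 → ℝ) : ℝ := ∑ i, a i * b i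

/-- Euclidean norm on `ℝ³`. -/
noncomputable def norm3 (a : Fin 3 → ℝ) : ℝ := Real.sqrt (∑ i, a i ^ 2)

/-- Cross product on `ℝ³`. -/
noncomputable def cross3 (a b : Fin 3 → ℝ) : Fin 3 → ℝ := crossProduct a b

/-- The imaginary (vector) part of a quaternion, as a vector in `ℝ³`. -/
noncomputable def vecPart (a : Quaternion ℝ) : Fin 3 → ℝ := ![a.imI, a.imJ, a.imK]

/-- The angular frequency `Ω₀ := 2(−ṗ q + q̇ p − q̇ × q)` of a differentiable
quaternion curve `𝔭 = [p, q]`. -/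
noncomputable def Ω₀ (𝔭 : ℝ → Quaternion ℝ) (t : ℝ) : Fin 3 → ℝ :=
  (2 : ℝ) • (-(deriv (fun s => (𝔭 s).re) t) • vecPart (𝔭 t)
    + (𝔭 t).re • deriv (fun s => vecPart (𝔭 s)) t
    - cross3 (deriv (fun s => vecPart (𝔭 s)) t) (vecPart (𝔭 t)))

instance : StarModule ℝ (Quaternion ℝ) := ⟨Quaternion.star_smul⟩

theorem LinearMap.hasDerivAt_comp {E F : Type*} [NormedAddCommGroup E] [NormedSpace ℝ E]
    [FiniteDimensional ℝ E] [NormedAddCommGroup F] [NormedSpace ℝ F] (L : E →ₗ[ℝ] F)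
    {f : ℝ → E} {f' : E} {t : ℝ} (hf : HasDerivAt f f' t) :
    HasDerivAt (fun s => L (f s)) (L f') t :=
  (LinearMap.toContinuousLinearMap L).hasFDerivAt.comp_hasDerivAt t hf

def vecPartₗ : Quaternion ℝ →ₗ[ℝ] Fin 3 → ℝ where
  toFun := vecPart
  map_add' a b := by ext i; fin_cases i <;> rfl
  map_smul' c a := by ext i; fin_cases i <;> rfl

theorem HasDerivAt.vecPart {f : ℝ → Quaternion ℝ} {f' : Quaternion ℝ} {t : ℝ}
    (hf : HasDerivAt f f' t) : HasDerivAt (fun s => vecPart (f s)) (vecPart f') t :=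
  vecPartₗ.hasDerivAt_comp hf

theorem vecPart_mul_sub_mul_comm (a b : Quaternion ℝ) :
    vecPart (a * b - b * a) = (2 : ℝ) • cross3 (vecPart a) (vecPart b) := by
  ext i
  fin_cases i <;>
    simp only [vecPart, cross3, crossProduct, LinearMap.mk₂_apply, Fin.isValue, Fin.reduceFinMk,
      Matrix.cons_val, Matrix.cons_val_zero, Matrix.cons_val_one, Pi.smul_apply, smul_eq_mul,
      Quaternion.imI_sub, Quaternion.imJ_sub, Quaternion.imK_sub, Quaternion.imI_mul,
      Quaternion.imJ_mul, Quaternion.imK_mul] <;>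
    ring

theorem vecPart_mul_star (a b : Quaternion ℝ) :
    vecPart (b * star a) =
      -b.re • vecPart a + a.re • vecPart b - cross3 (vecPart b) (vecPart a) := by
  ext i
  fin_cases i <;>
    simp only [vecPart, cross3, crossProduct, LinearMap.mk₂_apply, Fin.isValue, Fin.reduceFinMk,
      Matrix.cons_val, Matrix.cons_val_zero, Matrix.cons_val_one, Pi.add_apply, Pi.sub_apply,
      Pi.smul_apply, smul_eq_mul, Quaternion.re_star, Quaternion.imI_star, Quaternion.imJ_star,
      Quaternion.imK_star, Quaternion.imI_mul, Quaternion.imJ_mul, Quaternion.imK_mul] <;>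
    ring

theorem Ω₀_eq_two_smul_vecPart {𝔭 : ℝ → Quaternion ℝ} {t : ℝ} (h : DifferentiableAt ℝ 𝔭 t) :
    Ω₀ 𝔭 t = (2 : ℝ) • vecPart (deriv 𝔭 t * star (𝔭 t)) := by
  have hp := h.hasDerivAt
  have hre : HasDerivAt (fun s => (𝔭 s).re) (deriv 𝔭 t).re t :=
    (QuaternionAlgebra.reₗ (-1) 0 (-1)).hasDerivAt_comp hp
  rw [Ω₀, hre.deriv, hp.vecPart.deriv, vecPart_mul_star]

theorem HasDerivAt.mul_star_eq_neg_of_normSq_eq_one {𝔭 : ℝ → Quaternion ℝ}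
    {𝔭' : Quaternion ℝ} {t : ℝ} (hp : HasDerivAt 𝔭 𝔭' t)
    (hunit : ∀ s, Quaternion.normSq (𝔭 s) = 1) :
    𝔭 t * star 𝔭' = -(𝔭' * star (𝔭 t)) := by
  have hconst : (fun s => 𝔭 s * star (𝔭 s)) = fun _ => 1 := by
    funext s
    rw [Quaternion.self_mul_star, hunit, Quaternion.coe_one]
  have hderiv : HasDerivAt (fun s => 𝔭 s * star (𝔭 s)) _ t := hp.mul hp.star
  rw [hconst] at hderiv
  exact eq_neg_of_add_eq_zero_right ((hasDerivAt_const t 1).unique hderiv).symm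

theorem HasDerivAt.mul_mul_star_of_normSq_eq_one {𝔭 : ℝ → Quaternion ℝ} {𝔭' : Quaternion ℝ}
    {t : ℝ} (hp : HasDerivAt 𝔭 𝔭' t) (hunit : ∀ s, Quaternion.normSq (𝔭 s) = 1)
    (x : Quaternion ℝ) :
    HasDerivAt (fun s => 𝔭 s * x * star (𝔭 s))
      (𝔭' * star (𝔭 t) * (𝔭 t * x * star (𝔭 t))
        - 𝔭 t * x * star (𝔭 t) * (𝔭' * star (𝔭 t))) t := by
  refine ((hp.mul_const x).mul hp.star).congr_deriv ?_
  have hinv : star (𝔭 t) * 𝔭 t = 1 := by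
    rw [Quaternion.star_mul_self, hunit, Quaternion.coe_one]
  calc 𝔭' * x * star (𝔭 t) + 𝔭 t * x * star 𝔭'
      = 𝔭' * (star (𝔭 t) * 𝔭 t) * x * star (𝔭 t)
          + 𝔭 t * x * (star (𝔭 t) * 𝔭 t) * star 𝔭' := by rw [hinv, mul_one, mul_one]
    _ = 𝔭' * star (𝔭 t) * (𝔭 t * x * star (𝔭 t))
          + 𝔭 t * x * star (𝔭 t) * (𝔭 t * star 𝔭') := by noncomm_ring
    _ = _ := by rw [hp.mul_star_eq_neg_of_normSq_eq_one hunit]; noncomm_ring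

/-- **Rigid-body rotation equation.** For a differentiable unit-quaternion curve `𝔭`
and a fixed vector `r`, the vector `R(t) := Im(𝔭(t) ⋆ [0, r] ⋆ 𝔭(t)*)` is
differentiable with `Ṙ = Ω₀ × R`. -/
theorem rigid_body_rotation
    (𝔭 : ℝ → Quaternion ℝ) (hdiff : Differentiable ℝ 𝔭)
    (hunit : ∀ t, Quaternion.normSq (𝔭 t) = 1) (r : Fin 3 → ℝ) (t : ℝ) :
    HasDerivAt (fun s => vecPart (𝔭 s * quat 0 r * star (𝔭 s)))
      (cross3 (Ω₀ 𝔭 t) (vecPart (𝔭 t * quat 0 r * star (𝔭 t)))) t := by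
  have hR := ((hdiff t).hasDerivAt.mul_mul_star_of_normSq_eq_one hunit (quat 0 r)).vecPart
  rw [vecPart_mul_sub_mul_comm] at hR
  rw [Ω₀_eq_two_smul_vecPart (hdiff t)]
  simpa only [cross3, map_smul, LinearMap.smul_apply] using hR
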